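/- arXiv:2111.02841 — 2 statements merged into one kernel-verified Lean document; each statement's English description precedes it below -/
import Mathlib

section
/- Let 𝒮 = {(|ψ_j⟩, w_j)} and 𝒯 = {(|φ_k⟩, w'_k)} be two 1-designs in a d-dimensional Hilbert space (positive weights summing to d in each family, weighted projectors summing to the identity). Then the cross frame potential Φ_{1/2}(𝒮,𝒯) := Σ_{j,k} w_j w'_k |⟨ψ_j|φ_k⟩| satisfies d ≤ Φ_{1/2}(𝒮,𝒯) ≤ d^{3/2}, and the upper bound holds with equality iff |⟨ψ_j|φ_k⟩|² = 1/d for all j, k. -/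
/-! Taking the trace of the product of the two resolutions of the identity shows that the
overlaps `a_{jk} = |⟨ψ_j|φ_k⟩|` satisfy `∑ w_j w'_k a_{jk}² = d`, while the weights `w_j w'_k`
have total mass `d²`. Unit vectors have overlaps in `[0, 1]`, so `a ≥ a²` gives the lower bound.
For the upper bound, `∑ w_j w'_k (√d a_{jk} - 1)² = 2√d (d√d - ∑ w_j w'_k a_{jk}) ≥ 0`, with
equality exactly when every `a_{jk} = 1/√d`. -/

open Matrix

section Overlap

variable {𝕜 : Type*} [RCLike 𝕜] {ι : Type*} [Fintype ι]

theorem trace_vecMulVec_star_mul_vecMulVec_star (x y : ι → 𝕜) :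
    trace (vecMulVec x (star x) * vecMulVec y (star y)) = (‖star x ⬝ᵥ y‖ : 𝕜) ^ 2 := by
  rw [vecMulVec_mul_vecMulVec, trace_vecMulVec, dotProduct_smul, smul_eq_mul, dotProduct_star,
    dotProduct_comm y, ← RCLike.mul_conj]
  rfl

theorem norm_star_dotProduct_le_one {x y : ι → 𝕜} (hx : star x ⬝ᵥ x = 1)
    (hy : star y ⬝ᵥ y = 1) : ‖star x ⬝ᵥ y‖ ≤ 1 := by
  have norm_toLp {z : ι → 𝕜} (hz : star z ⬝ᵥ z = 1) : ‖WithLp.toLp 2 z‖ = 1 := by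
    have h := inner_self_eq_norm_sq_to_K (𝕜 := 𝕜) (WithLp.toLp 2 z)
    rw [EuclideanSpace.inner_toLp_toLp, dotProduct_comm, hz] at h
    exact (pow_eq_one_iff_of_nonneg (norm_nonneg _) two_ne_zero).mp (by exact_mod_cast h.symm)
  simpa [EuclideanSpace.inner_toLp_toLp, dotProduct_comm, norm_toLp hx, norm_toLp hy]
    using norm_inner_le_norm (𝕜 := 𝕜) (WithLp.toLp 2 x) (WithLp.toLp 2 y)

theorem sum_sum_mul_norm_star_dotProduct_sq_eq_card [DecidableEq ι] {m n : Type*} [Fintype m]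
    [Fintype n] {v : m → ι → 𝕜} {w : m → ℝ} {u : n → ι → 𝕜} {w' : n → ℝ}
    (hv : ∑ j, (w j : 𝕜) • vecMulVec (v j) (star (v j)) = 1)
    (hu : ∑ k, (w' k : 𝕜) • vecMulVec (u k) (star (u k)) = 1) :
    ∑ j, ∑ k, w j * w' k * ‖star (v j) ⬝ᵥ u k‖ ^ 2 = Fintype.card ι := by
  have h := congrArg trace (congrArg₂ (· * ·) hv hu)
  simp only [Finset.sum_mul_sum, smul_mul_smul, trace_sum, trace_smul,
    trace_vecMulVec_star_mul_vecMulVec_star, Matrix.one_mul, trace_one, smul_eq_mul] at h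
  exact_mod_cast h

end Overlap

section WeightedSums

variable {ι : Type*} [Fintype ι] {c a : ι → ℝ}

theorem sum_mul_sq_le_sum_mul (hc : ∀ i, 0 ≤ c i) (ha₀ : ∀ i, 0 ≤ a i) (ha₁ : ∀ i, a i ≤ 1) :
    ∑ i, c i * a i ^ 2 ≤ ∑ i, c i * a i :=
  Finset.sum_le_sum fun i _ => mul_le_mul_of_nonneg_left (sq_le (ha₀ i) (ha₁ i)) (hc i)

theorem sum_mul_le_mul_sqrt_and_eq_iff {d : ℝ} (hd : 0 < d) (hc : ∀ i, 0 < c i)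
    (ha : ∀ i, 0 ≤ a i) (hc_sum : ∑ i, c i = d ^ 2) (hca_sum : ∑ i, c i * a i ^ 2 = d) :
    ∑ i, c i * a i ≤ d * √d ∧ (∑ i, c i * a i = d * √d ↔ ∀ i, a i ^ 2 = 1 / d) := by
  have hs : (√d) ^ 2 = d := Real.sq_sqrt hd.le
  have hs₀ : 0 < √d := Real.sqrt_pos.mpr hd
  have expand : ∑ i, c i * (√d * a i - 1) ^ 2 = 2 * √d * (d * √d - ∑ i, c i * a i) := by
    have h : ∀ i, c i * (√d * a i - 1) ^ 2 = d * (c i * a i ^ 2) - 2 * √d * (c i * a i) + c i :=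
      fun i => by linear_combination (c i * a i ^ 2) * hs
    simp only [h, Finset.sum_add_distrib, Finset.sum_sub_distrib, ← Finset.mul_sum, hca_sum,
      hc_sum]
    linear_combination (-2 * d) * hs
  have hterm : ∀ i, 0 ≤ c i * (√d * a i - 1) ^ 2 := fun i => by have := hc i; positivity
  have hsum := Finset.sum_nonneg fun i (_ : i ∈ Finset.univ) => hterm i
  refine ⟨sub_nonneg.mp ((mul_nonneg_iff_of_pos_left (by positivity)).mp (expand ▸ hsum)), ?_⟩
  have hzero : ∀ i, c i * (√d * a i - 1) ^ 2 = 0 ↔ a i ^ 2 = 1 / d := fun i => by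
    rw [mul_eq_zero, or_iff_right (hc i).ne', sq_eq_zero_iff, sub_eq_zero,
      ← pow_eq_one_iff_of_nonneg (mul_nonneg hs₀.le (ha i)) two_ne_zero, mul_pow, hs,
      eq_div_iff hd.ne', mul_comm]
  calc ∑ i, c i * a i = d * √d ↔ ∑ i, c i * (√d * a i - 1) ^ 2 = 0 := by
        rw [expand, mul_eq_zero, or_iff_right (by positivity), sub_eq_zero, eq_comm]
    _ ↔ ∀ i, a i ^ 2 = 1 / d := by
        simp [Finset.sum_eq_zero_iff_of_nonneg fun i _ => hterm i, hzero]

end WeightedSums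

/-- bounds for the cross frame potential `Φ_{1/2}(𝒮,𝒯)` of two
1-designs, with the equality condition for the upper bound. -/
theorem stmt_7 (d m n : ℕ) (hd : 1 ≤ d)
    (v : Fin m → Fin d → ℂ) (w : Fin m → ℝ)
    (u : Fin n → Fin d → ℂ) (w' : Fin n → ℝ)
    (hw : ∀ j, 0 < w j) (hw' : ∀ k, 0 < w' k)
    (hwsum : ∑ j, w j = d) (hw'sum : ∑ k, w' k = d)
    (hvunit : ∀ j, star (v j) ⬝ᵥ v j = 1) (huunit : ∀ k, star (u k) ⬝ᵥ u k = 1)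
    (hvdesign : ∑ j, (w j : ℂ) • Matrix.vecMulVec (v j) (star (v j)) = 1)
    (hudesign : ∑ k, (w' k : ℂ) • Matrix.vecMulVec (u k) (star (u k)) = 1) :
    (d : ℝ) ≤ ∑ j, ∑ k, w j * w' k * ‖star (v j) ⬝ᵥ u k‖ ∧
    ∑ j, ∑ k, w j * w' k * ‖star (v j) ⬝ᵥ u k‖ ≤ (d : ℝ) * Real.sqrt d ∧
    (∑ j, ∑ k, w j * w' k * ‖star (v j) ⬝ᵥ u k‖ = (d : ℝ) * Real.sqrt d ↔
      ∀ j k, ‖star (v j) ⬝ᵥ u k‖ ^ 2 = 1 / (d : ℝ)) := by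
  have hc : ∀ p : Fin m × Fin n, 0 < w p.1 * w' p.2 := fun p => mul_pos (hw p.1) (hw' p.2)
  have hc_sum : ∑ p : Fin m × Fin n, w p.1 * w' p.2 = (d : ℝ) ^ 2 := by
    rw [Fintype.sum_prod_type, ← Finset.sum_mul_sum, hwsum, hw'sum, sq]
  have hca_sum : ∑ p : Fin m × Fin n, w p.1 * w' p.2 * ‖star (v p.1) ⬝ᵥ u p.2‖ ^ 2 = d := by
    simpa [Fintype.sum_prod_type] using
      sum_sum_mul_norm_star_dotProduct_sq_eq_card hvdesign hudesign
  have hlower := sum_mul_sq_le_sum_mul (fun p => (hc p).le) (fun _ => norm_nonneg _)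
    fun p => norm_star_dotProduct_le_one (hvunit p.1) (huunit p.2)
  obtain ⟨hupper, heq⟩ := sum_mul_le_mul_sqrt_and_eq_iff (by exact_mod_cast hd) hc
    (fun _ => norm_nonneg _) hc_sum hca_sum
  rw [hca_sum] at hlower
  simp only [Fintype.sum_prod_type, Prod.forall] at hlower hupper heq
  exact ⟨hlower, hupper, heq⟩
end

section
/- Suppose 0 < a² ≤ b ≤ a < 1, and x₁, …, x_m ∈ [0,1] and p₁, …, p_m ∈ [0,1] satisfy Σ_j p_j = 1, Σ_j p_j x_j = a, and Σ_j p_j x_j² = b. Then a·√(a/b) ≤ Σ_j p_j √x_j ≤ ζ(a,b), where ζ(a,b) = (b − a² + (1−a)√((1−a)(a−b)))/(1 − 2a + b). -/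
/-- The function ζ(a,b) from the paper. -/
noncomputable def zeta (a b : ℝ) : ℝ :=
  (b - a ^ 2 + (1 - a) * Real.sqrt ((1 - a) * (a - b))) / (1 - 2 * a + b)

/-!
Both bounds are weak duality for a moment problem: a pointwise inequality
`k √x ≤ c₀ + c₁ x + c₂ x²` (or `≥`) on the support integrates to a bound on `∑ pⱼ √xⱼ`
in terms of the first two moments. For the lower bound the certificate touches `√x` at
`x = 0` and, to second order, at `x = b / a`; for the upper bound it touches at `x = 1` and,
to second order, at `x = t²` with `t² = (a - b) / (1 - a)`. These are the supports of the
extremal laws. When `a = b` the law lives on `{0, 1}`, where `√x = x`.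
-/

open Finset Real

lemma three_mul_sub_le_two_mul_sqrt {r x : ℝ} (hr : 0 ≤ r) (hx : 0 ≤ x) :
    3 * r * x - r ^ 3 * x ^ 2 ≤ 2 * √x := by
  obtain ⟨s, hs, rfl⟩ : ∃ s, 0 ≤ s ∧ s ^ 2 = x := ⟨√x, sqrt_nonneg x, sq_sqrt hx⟩
  rw [sqrt_sq hs]
  -- `2s - 3rs² + r³s⁴ = s (rs - 1)² (rs + 2)`
  nlinarith [mul_nonneg (mul_nonneg hs (sq_nonneg (r * s - 1))) (by positivity : 0 ≤ r * s + 2)]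

lemma two_mul_sqrt_le_quadratic {t x : ℝ} (ht : 0 ≤ t) (hx₀ : 0 ≤ x) (hx₁ : x ≤ 1) :
    2 * t * (1 + t) ^ 2 * √x ≤ t ^ 2 * (1 + 2 * t) + (1 + 2 * t + 3 * t ^ 2) * x - x ^ 2 := by
  obtain ⟨s, hs, rfl⟩ : ∃ s, 0 ≤ s ∧ s ^ 2 = x := ⟨√x, sqrt_nonneg x, sq_sqrt hx₀⟩
  have hs₁ : s ≤ 1 := by nlinarith
  rw [sqrt_sq hs]
  -- the difference is `(s - t)² (1 - s) (s + 1 + 2t)`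
  nlinarith [mul_nonneg (mul_nonneg (sq_nonneg (s - t)) (sub_nonneg.2 hs₁))
    (by positivity : 0 ≤ s + 1 + 2 * t)]

section MomentBounds

variable {ι : Type*} [Fintype ι] {p x : ι → ℝ}

lemma mul_sum_le_of_le_quadratic {f : ℝ → ℝ} {k c₀ c₁ c₂ : ℝ} (hp : ∀ j, 0 ≤ p j)
    (hf : ∀ j, k * f (x j) ≤ c₀ + c₁ * x j + c₂ * x j ^ 2) :
    k * ∑ j, p j * f (x j) ≤
      c₀ * ∑ j, p j + c₁ * ∑ j, p j * x j + c₂ * ∑ j, p j * x j ^ 2 := by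
  calc k * ∑ j, p j * f (x j) = ∑ j, p j * (k * f (x j)) := by
        rw [mul_sum]; exact sum_congr rfl fun j _ => by ring
    _ ≤ ∑ j, p j * (c₀ + c₁ * x j + c₂ * x j ^ 2) :=
        sum_le_sum fun j _ => mul_le_mul_of_nonneg_left (hf j) (hp j)
    _ = c₀ * ∑ j, p j + c₁ * ∑ j, p j * x j + c₂ * ∑ j, p j * x j ^ 2 := by
        simp only [mul_sum, ← sum_add_distrib]; exact sum_congr rfl fun j _ => by ring

lemma quadratic_le_mul_sum_of_quadratic_le {f : ℝ → ℝ} {k c₀ c₁ c₂ : ℝ} (hp : ∀ j, 0 ≤ p j)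
    (hf : ∀ j, c₀ + c₁ * x j + c₂ * x j ^ 2 ≤ k * f (x j)) :
    c₀ * ∑ j, p j + c₁ * ∑ j, p j * x j + c₂ * ∑ j, p j * x j ^ 2 ≤
      k * ∑ j, p j * f (x j) := by
  have h := mul_sum_le_of_le_quadratic (x := x) (f := f) (k := -k) (c₀ := -c₀) (c₁ := -c₁)
    (c₂ := -c₂) hp fun j => by linarith [hf j]
  linarith

lemma mul_sqrt_div_le_sum_mul_sqrt (hp : ∀ j, 0 ≤ p j) (hx : ∀ j, 0 ≤ x j)
    (hb : 0 < ∑ j, p j * x j ^ 2) :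
    (∑ j, p j * x j) * √((∑ j, p j * x j) / ∑ j, p j * x j ^ 2) ≤ ∑ j, p j * √(x j) := by
  set a := ∑ j, p j * x j
  set b := ∑ j, p j * x j ^ 2
  set r := √(a / b)
  have ha : 0 ≤ a := sum_nonneg fun j _ => mul_nonneg (hp j) (hx j)
  have hr : r ^ 2 * b = a := by rw [sq_sqrt (by positivity)]; field_simp
  have h := quadratic_le_mul_sum_of_quadratic_le (x := x) (f := sqrt) (k := 2) (c₀ := 0)
    (c₁ := 3 * r) (c₂ := -r ^ 3) hp fun j => by
      linarith [three_mul_sub_le_two_mul_sqrt (sqrt_nonneg (a / b)) (hx j)]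
  linear_combination (h + r * hr) / 2

lemma sum_mul_sqrt_eq_of_sum_mul_sq_eq (hp : ∀ j, 0 ≤ p j) (hx₀ : ∀ j, 0 ≤ x j)
    (hx₁ : ∀ j, x j ≤ 1) (h : ∑ j, p j * x j ^ 2 = ∑ j, p j * x j) :
    ∑ j, p j * √(x j) = ∑ j, p j * x j := by
  have hvar : ∀ j ∈ univ, p j * (x j - x j ^ 2) = 0 := by
    refine (sum_eq_zero_iff_of_nonneg fun j _ => ?_).1 ?_
    · exact mul_nonneg (hp j) (by nlinarith [hx₀ j, hx₁ j])
    · simp only [mul_sub, sum_sub_distrib, h, sub_self]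
  refine sum_congr rfl fun j hj => ?_
  rcases mul_eq_zero.1 (hvar j hj) with hpj | hxj
  · simp [hpj]
  · have : x j = 0 ∨ x j = 1 := by
      rcases mul_eq_zero.1 (show x j * (1 - x j) = 0 by linear_combination hxj) with h0 | h1
      · exact .inl h0
      · exact .inr (by linarith)
    rcases this with h | h <;> simp [h]

lemma one_add_mul_sum_mul_sqrt_le {t : ℝ} (ht : 0 < t) (hp : ∀ j, 0 ≤ p j)
    (hx₀ : ∀ j, 0 ≤ x j) (hx₁ : ∀ j, x j ≤ 1) (hsum : ∑ j, p j = 1)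
    (ht2 : t ^ 2 * (1 - ∑ j, p j * x j) = ∑ j, p j * x j - ∑ j, p j * x j ^ 2) :
    (1 + t) * ∑ j, p j * √(x j) ≤ ∑ j, p j * x j + t := by
  have h := mul_sum_le_of_le_quadratic (x := x) (f := sqrt) (k := 2 * t * (1 + t) ^ 2)
    (c₀ := t ^ 2 * (1 + 2 * t)) (c₁ := 1 + 2 * t + 3 * t ^ 2) (c₂ := -1) hp fun j => by
      linarith [two_mul_sqrt_le_quadratic ht.le (hx₀ j) (hx₁ j)]
  rw [hsum] at h
  have hpos : 0 < 2 * t * (1 + t) := by positivity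
  refine le_of_mul_le_mul_left ?_ hpos
  linear_combination h - ht2

end MomentBounds

lemma zeta_eq_div {a b : ℝ} (hab : a ^ 2 ≤ b) (hba : b ≤ a) (ha1 : a < 1) :
    zeta a b = (a + √((a - b) / (1 - a))) / (1 + √((a - b) / (1 - a))) := by
  set t := √((a - b) / (1 - a))
  have h1a : 0 < 1 - a := by linarith
  have ht : t ^ 2 * (1 - a) = a - b := by
    rw [sq_sqrt (div_nonneg (by linarith) h1a.le)]; field_simp
  have hroot : √((1 - a) * (a - b)) = (1 - a) * t := by
    rw [← ht, show (1 - a) * (t ^ 2 * (1 - a)) = ((1 - a) * t) ^ 2 by ring]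
    exact sqrt_sq (by positivity)
  have hden : 0 < 1 - 2 * a + b := by nlinarith
  rw [zeta, hroot, div_eq_div_iff hden.ne' (by positivity)]
  linear_combination (1 - a) * ht

theorem stmt_10_general (m : ℕ) (a b : ℝ) (x p : Fin m → ℝ)
    (ha2 : 0 < a ^ 2) (hab : a ^ 2 ≤ b) (hba : b ≤ a) (ha1 : a < 1)
    (hx : ∀ j, 0 ≤ x j) (hx' : ∀ j, x j ≤ 1)
    (hp : ∀ j, 0 ≤ p j)
    (hsum : ∑ j, p j = 1) (hmean : ∑ j, p j * x j = a)
    (hsec : ∑ j, p j * x j ^ 2 = b) :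
    a * Real.sqrt (a / b) ≤ ∑ j, p j * Real.sqrt (x j) ∧
      ∑ j, p j * Real.sqrt (x j) ≤ zeta a b := by
  refine ⟨?_, ?_⟩
  · have h := mul_sqrt_div_le_sum_mul_sqrt hp hx (hsec ▸ ha2.trans_le hab)
    rwa [hmean, hsec] at h
  rw [zeta_eq_div hab hba ha1]
  rcases hba.eq_or_lt with rfl | hlt
  · rw [sub_self, zero_div, sqrt_zero, add_zero, add_zero, div_one, ← hmean]
    exact (sum_mul_sqrt_eq_of_sum_mul_sq_eq hp hx hx' (hsec.trans hmean.symm)).le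
  have ht : 0 < √((a - b) / (1 - a)) := sqrt_pos.2 (div_pos (by linarith) (by linarith))
  have h := one_add_mul_sum_mul_sqrt_le ht hp hx hx' hsum (by
    rw [hmean, hsec, sq_sqrt (by positivity)]
    field_simp [(by linarith : (1 : ℝ) - a ≠ 0)])
  rw [hmean] at h
  rwa [le_div_iff₀ (by positivity), mul_comm]

/-- half-moment bounds for a finitely supported [0,1]-valued
random variable with first moment a and second moment b. -/
theorem stmt_10 (m : ℕ) (a b : ℝ) (x p : Fin m → ℝ)
    (ha2 : 0 < a ^ 2) (hab : a ^ 2 ≤ b) (hba : b ≤ a) (ha1 : a < 1)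
    (hx : ∀ j, 0 ≤ x j) (hx' : ∀ j, x j ≤ 1)
    (hp : ∀ j, 0 ≤ p j) (hp' : ∀ j, p j ≤ 1)
    (hsum : ∑ j, p j = 1) (hmean : ∑ j, p j * x j = a)
    (hsec : ∑ j, p j * x j ^ 2 = b) :
    a * Real.sqrt (a / b) ≤ ∑ j, p j * Real.sqrt (x j) ∧
      ∑ j, p j * Real.sqrt (x j) ≤ zeta a b :=
  stmt_10_general m a b x p ha2 hab hba ha1 hx hx' hp hsum hmean hsec
end
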